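/- arXiv:2101.12566 — 2 statements merged into one kernel-verified Lean document; each statement's English description precedes it below -/
import Mathlib

section
/- There exists a universal constant C > 0 such that for all L > 0 and all L²-normalized ψ ∈ H¹(𝕋³_L), W_L(ψ) ≤ C·L·T_L(ψ), where T_L(ψ) = ∫|∇ψ|² and W_L(ψ) = Σ_{0≠k} |k|^{-2}|(ρ_ψ)_k|² with ρ_ψ = |ψ|². Consequently, E_L(ψ) = T_L(ψ) − W_L(ψ) ≥ (1 − CL)T_L(ψ), so for L < 1/C the Pekar functional E_L is strictly positive on every non-constant normalized ψ and is minimized by the constant function with minimum value 0. -/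
/-! For `k ≠ 0` the triangle inequality `|k| ≤ |j| + |j + k|` and Cauchy–Schwarz give
`|k| ∑ⱼ |ψⱼ| |ψⱼ₊ₖ| ≤ 2 ‖ψ‖₂ ‖|·| ψ‖₂`, i.e. `|k|² |ρ̂(k)|² ≲ T_L / L`. Each term of `W_L` is
therefore `≲ L T_L |k|⁻⁴`, and `∑_{k ≠ 0} |k|⁻⁴` converges on `ℤ³`. -/

open scoped Real BigOperators

abbrev Lat3 := Fin 3 → ℤ

noncomputable def knorm (L : ℝ) (k : Lat3) : ℝ :=
  (2 * Real.pi / L) * Real.sqrt (∑ i, ((k i : ℝ)) ^ 2)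

/-- Fourier coefficients of `ρ_ψ = |ψ|²`. -/
noncomputable def rhoCoef (L : ℝ) (ψ : Lat3 → ℂ) (k : Lat3) : ℂ :=
  ((L ^ (-(3:ℝ)/2) : ℝ) : ℂ) * ∑' j : Lat3, (starRingEnd ℂ) (ψ j) * ψ (j + k)

/-- Kinetic energy `T_L(ψ) = ∫|∇ψ|² = Σ_k |k|²|ψ_k|²` (Parseval). -/
noncomputable def TL (L : ℝ) (ψ : Lat3 → ℂ) : ℝ :=
  ∑' k : Lat3, knorm L k ^ 2 * ‖ψ k‖ ^ 2

/-- Interaction energy `W_L(ψ) = Σ_{0≠k} |k|^{-2}|(ρ_ψ)_k|²`. -/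
noncomputable def WL (L : ℝ) (ψ : Lat3 → ℂ) : ℝ :=
  ∑' k : Lat3, if k = 0 then 0 else ‖rhoCoef L ψ k‖ ^ 2 / knorm L k ^ 2

/-- The torus Pekar functional `E_L = T_L − W_L`. -/
noncomputable def EL (L : ℝ) (ψ : Lat3 → ℂ) : ℝ := TL L ψ - WL L ψ

/-- The constant (normalized) function on `𝕋³_L`, in Fourier representation. -/
noncomputable def constFn : Lat3 → ℂ := fun j => if j = 0 then 1 else 0

section StdLattice

variable (d : ℕ)

abbrev stdLattice : Submodule ℤ (EuclideanSpace ℝ (Fin d)) :=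
  Submodule.span ℤ (Set.range (EuclideanSpace.basisFun (Fin d) ℝ).toBasis)

noncomputable def stdLatticeEquiv : (Fin d → ℤ) ≃ₗ[ℤ] stdLattice d :=
  ((Module.Basis.restrictScalars ℤ _).repr ≪≫ₗ Finsupp.linearEquivFunOnFinite ℤ ℤ (Fin d)).symm

lemma stdLatticeEquiv_apply (k : Fin d → ℤ) (i : Fin d) :
    (stdLatticeEquiv d k : EuclideanSpace ℝ (Fin d)) i = k i := by
  have h := Module.Basis.restrictScalars_repr_apply ℤ (EuclideanSpace.basisFun (Fin d) ℝ).toBasis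
    (stdLatticeEquiv d k) i
  simp only [stdLatticeEquiv, LinearEquiv.trans_symm, LinearEquiv.trans_apply,
    LinearEquiv.apply_symm_apply] at h ⊢
  simpa using h.symm

/-- The Euclidean length on `ℤᵈ`, realised through the standard lattice of
`EuclideanSpace ℝ (Fin d)` so that the lattice `p`-series bounds of `ZLattice` apply. -/
noncomputable def latticeNorm : AddGroupSeminorm (Fin d → ℤ) :=
  (normAddGroupSeminorm _).comp
    ((stdLattice d).subtype.toAddMonoidHom.comp (stdLatticeEquiv d).toAddMonoidHom)

lemma latticeNorm_apply (k : Fin d → ℤ) : latticeNorm d k = √(∑ i, (k i : ℝ) ^ 2) := by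
  simp [latticeNorm, EuclideanSpace.norm_eq, stdLatticeEquiv_apply]

variable {d} in
lemma latticeNorm_pos {k : Fin d → ℤ} (hk : k ≠ 0) : 0 < latticeNorm d k := by
  change 0 < ‖(stdLatticeEquiv d k : EuclideanSpace ℝ (Fin d))‖
  simpa using hk

lemma summable_inv_latticeNorm_pow {n : ℕ} (hn : d < n) :
    Summable fun k => (latticeNorm d k ^ n)⁻¹ := by
  have hrank : Module.finrank ℤ (stdLattice d) = d := by
    rw [ZLattice.rank ℝ, finrank_euclideanSpace_fin]
  have h : Summable fun z : stdLattice d => ‖z‖ ^ (-n : ℝ) :=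
    ZLattice.summable_norm_rpow (stdLattice d) _
      (by rw [hrank]; exact neg_lt_neg (by exact_mod_cast hn))
  have h' := (stdLatticeEquiv d).toEquiv.summable_iff
    (f := fun z : stdLattice d => ‖z‖ ^ (-n : ℝ)) |>.mpr h
  refine h'.congr fun k => ?_
  simp only [Function.comp_apply, Real.rpow_neg (norm_nonneg _), Real.rpow_natCast]
  rfl

end StdLattice

lemma summable_mul_and_tsum_mul_le_sqrt_mul_sqrt {ι : Type*} {a b : ι → ℝ}
    (ha : ∀ i, 0 ≤ a i) (hb : ∀ i, 0 ≤ b i)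
    (ha2 : Summable fun i => a i ^ 2) (hb2 : Summable fun i => b i ^ 2) :
    Summable (fun i => a i * b i) ∧
      ∑' i, a i * b i ≤ √(∑' i, a i ^ 2) * √(∑' i, b i ^ 2) := by
  simpa only [Real.rpow_two, Real.sqrt_eq_rpow] using
    Real.summable_and_inner_le_Lp_mul_Lq_tsum_of_nonneg .two_two ha hb
      (by simpa only [Real.rpow_two] using ha2) (by simpa only [Real.rpow_two] using hb2)

section Autocorrelation

variable {G : Type*} [AddCommGroup G] (ν : AddGroupSeminorm G) {a : G → ℝ}

lemma AddGroupSeminorm.le_add_shift (j k : G) : ν k ≤ ν j + ν (j + k) := by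
  calc ν k = ν (-j + (j + k)) := by rw [neg_add_cancel_left]
    _ ≤ ν (-j) + ν (j + k) := map_add_le_add ν _ _
    _ = ν j + ν (j + k) := by rw [map_neg_eq_map]

/-- The weight `ν k` is split along `ν k ≤ ν j + ν (j + k)`, and Cauchy–Schwarz bounds each half. -/
lemma AddGroupSeminorm.mul_tsum_mul_shift_le (ha : ∀ j, 0 ≤ a j)
    (ha2 : Summable fun j => a j ^ 2) (hνa : Summable fun j => (ν j * a j) ^ 2) (k : G) :
    Summable (fun j => a j * a (j + k)) ∧
      ν k * ∑' j, a j * a (j + k) ≤ 2 * √(∑' j, a j ^ 2) * √(∑' j, (ν j * a j) ^ 2) := by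
  set e := Equiv.addRight k
  have hνa_nonneg : ∀ j, 0 ≤ ν j * a j := fun j => mul_nonneg (apply_nonneg ν j) (ha j)
  have ha2_shift : Summable fun j => a (j + k) ^ 2 :=
    e.summable_iff (f := fun j => a j ^ 2) |>.mpr ha2
  have hνa_shift : Summable fun j => (ν (j + k) * a (j + k)) ^ 2 :=
    e.summable_iff (f := fun j => (ν j * a j) ^ 2) |>.mpr hνa
  have ha2_shift_eq : ∑' j, a (j + k) ^ 2 = ∑' j, a j ^ 2 := e.tsum_eq (fun j => a j ^ 2)
  have hνa_shift_eq : ∑' j, (ν (j + k) * a (j + k)) ^ 2 = ∑' j, (ν j * a j) ^ 2 :=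
    e.tsum_eq (fun j => (ν j * a j) ^ 2)
  obtain ⟨hab, -⟩ := summable_mul_and_tsum_mul_le_sqrt_mul_sqrt ha (fun _ => ha _) ha2 ha2_shift
  obtain ⟨h₁, h₁_le⟩ :=
    summable_mul_and_tsum_mul_le_sqrt_mul_sqrt hνa_nonneg (fun _ => ha _) hνa ha2_shift
  obtain ⟨h₂, h₂_le⟩ :=
    summable_mul_and_tsum_mul_le_sqrt_mul_sqrt ha (fun _ => hνa_nonneg _) ha2 hνa_shift
  refine ⟨hab, ?_⟩
  have hpoint (j : G) : ν k * (a j * a (j + k)) ≤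
      ν j * a j * a (j + k) + a j * (ν (j + k) * a (j + k)) := by
    have := mul_le_mul_of_nonneg_right (ν.le_add_shift j k) (mul_nonneg (ha j) (ha (j + k)))
    linarith
  calc ν k * ∑' j, a j * a (j + k) = ∑' j, ν k * (a j * a (j + k)) := tsum_mul_left.symm
    _ ≤ ∑' j, (ν j * a j * a (j + k) + a j * (ν (j + k) * a (j + k))) :=
        (hab.mul_left _).tsum_le_tsum hpoint (h₁.add h₂)
    _ = ∑' j, ν j * a j * a (j + k) + ∑' j, a j * (ν (j + k) * a (j + k)) := h₁.tsum_add h₂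
    _ ≤ √(∑' j, (ν j * a j) ^ 2) * √(∑' j, a (j + k) ^ 2)
          + √(∑' j, a j ^ 2) * √(∑' j, (ν (j + k) * a (j + k)) ^ 2) := add_le_add h₁_le h₂_le
    _ = 2 * √(∑' j, a j ^ 2) * √(∑' j, (ν j * a j) ^ 2) := by
        rw [ha2_shift_eq, hνa_shift_eq]
        ring

end Autocorrelation

lemma knorm_eq (L : ℝ) (k : Lat3) : knorm L k = 2 * π / L * latticeNorm 3 k := by
  rw [latticeNorm_apply]
  rfl

lemma TL_eq (L : ℝ) (ψ : Lat3 → ℂ) :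
    TL L ψ = (2 * π / L) ^ 2 * ∑' j, (latticeNorm 3 j * ‖ψ j‖) ^ 2 := by
  rw [TL, ← tsum_mul_left]
  congr 1 with j
  rw [knorm_eq]
  ring

lemma TL_nonneg (L : ℝ) (ψ : Lat3 → ℂ) : 0 ≤ TL L ψ :=
  tsum_nonneg fun _ => by positivity

lemma TL_pos {L : ℝ} (hL : 0 < L) {ψ : Lat3 → ℂ}
    (hT : Summable fun k => knorm L k ^ 2 * ‖ψ k‖ ^ 2) {k : Lat3} (hk : k ≠ 0) (hψk : ψ k ≠ 0) :
    0 < TL L ψ := by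
  have hν := latticeNorm_pos hk
  refine hT.tsum_pos (fun _ => by positivity) k ?_
  rw [knorm_eq]
  have := norm_pos_iff.mpr hψk
  positivity

lemma norm_rhoCoef_le {L : ℝ} (hL : 0 ≤ L) (ψ : Lat3 → ℂ) (k : Lat3)
    (hsum : Summable fun j => ‖ψ j‖ * ‖ψ (j + k)‖) :
    ‖rhoCoef L ψ k‖ ≤ L ^ (-(3:ℝ)/2) * ∑' j, ‖ψ j‖ * ‖ψ (j + k)‖ := by
  rw [rhoCoef, norm_mul, Complex.norm_real, Real.norm_of_nonneg (by positivity)]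
  refine mul_le_mul_of_nonneg_left ?_ (by positivity)
  exact (norm_tsum_le_tsum_norm (by simpa using hsum)).trans_eq (by simp)

lemma sq_latticeNorm_mul_norm_rhoCoef_le {L : ℝ} (hL : 0 < L) {ψ : Lat3 → ℂ}
    (hψ2 : Summable fun j => ‖ψ j‖ ^ 2) (hnorm : ∑' j, ‖ψ j‖ ^ 2 = 1)
    (hT : Summable fun k => knorm L k ^ 2 * ‖ψ k‖ ^ 2) (k : Lat3) :
    (latticeNorm 3 k * ‖rhoCoef L ψ k‖) ^ 2 ≤ TL L ψ / (π ^ 2 * L) := by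
  set T := ∑' j, (latticeNorm 3 j * ‖ψ j‖) ^ 2
  have hνψ : Summable fun j => (latticeNorm 3 j * ‖ψ j‖) ^ 2 := by
    refine (hT.mul_left ((L / (2 * π)) ^ 2)).congr fun j => ?_
    rw [knorm_eq]
    field_simp
  obtain ⟨hsum, hle⟩ := (latticeNorm 3).mul_tsum_mul_shift_le (a := fun j => ‖ψ j‖)
    (fun _ => norm_nonneg _) hψ2 hνψ k
  rw [hnorm, Real.sqrt_one, mul_one] at hle
  have hρ : latticeNorm 3 k * ‖rhoCoef L ψ k‖ ≤ L ^ (-(3:ℝ)/2) * (2 * √T) := by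
    calc latticeNorm 3 k * ‖rhoCoef L ψ k‖
        ≤ latticeNorm 3 k * (L ^ (-(3:ℝ)/2) * ∑' j, ‖ψ j‖ * ‖ψ (j + k)‖) := by
          gcongr
          exact norm_rhoCoef_le hL.le ψ k hsum
      _ ≤ L ^ (-(3:ℝ)/2) * (2 * √T) := by
          rw [mul_left_comm]
          gcongr
  have hL3 : (L ^ (-(3:ℝ)/2)) ^ 2 = (L ^ 3)⁻¹ := by
    rw [← Real.rpow_natCast, ← Real.rpow_mul hL.le, show -(3:ℝ)/2 * (2:ℕ) = -(3:ℕ) by norm_num,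
      Real.rpow_neg hL.le, Real.rpow_natCast]
  calc (latticeNorm 3 k * ‖rhoCoef L ψ k‖) ^ 2 ≤ (L ^ (-(3:ℝ)/2) * (2 * √T)) ^ 2 := by
        gcongr
    _ = TL L ψ / (π ^ 2 * L) := by
        rw [mul_pow, hL3, mul_pow, Real.sq_sqrt (tsum_nonneg fun _ => sq_nonneg _), TL_eq]
        field_simp

lemma WL_summand_le {L : ℝ} (hL : 0 < L) {ψ : Lat3 → ℂ}
    (hψ2 : Summable fun j => ‖ψ j‖ ^ 2) (hnorm : ∑' j, ‖ψ j‖ ^ 2 = 1)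
    (hT : Summable fun k => knorm L k ^ 2 * ‖ψ k‖ ^ 2) (k : Lat3) :
    (if k = 0 then 0 else ‖rhoCoef L ψ k‖ ^ 2 / knorm L k ^ 2) ≤
      L * TL L ψ / (4 * π ^ 4) * (latticeNorm 3 k ^ 4)⁻¹ := by
  split_ifs with hk
  · simp [hk]
  have hν := latticeNorm_pos hk
  calc ‖rhoCoef L ψ k‖ ^ 2 / knorm L k ^ 2
      = (latticeNorm 3 k * ‖rhoCoef L ψ k‖) ^ 2 * (L / (2 * π)) ^ 2 *
          (latticeNorm 3 k ^ 4)⁻¹ := by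
        rw [knorm_eq]
        field_simp
    _ ≤ TL L ψ / (π ^ 2 * L) * (L / (2 * π)) ^ 2 * (latticeNorm 3 k ^ 4)⁻¹ := by
        gcongr
        exact sq_latticeNorm_mul_norm_rhoCoef_le hL hψ2 hnorm hT k
    _ = L * TL L ψ / (4 * π ^ 4) * (latticeNorm 3 k ^ 4)⁻¹ := by
        field_simp
        ring

noncomputable def pekarConst : ℝ := (∑' k : Lat3, (latticeNorm 3 k ^ 4)⁻¹) / (4 * π ^ 4)

lemma pekarConst_pos : 0 < pekarConst := by
  have hk : (Pi.single 0 1 : Lat3) ≠ 0 := by simp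
  have hν := latticeNorm_pos hk
  have hS := (summable_inv_latticeNorm_pow 3 (by norm_num : 3 < 4)).tsum_pos
    (fun _ => by positivity) _ (by positivity : 0 < (latticeNorm 3 (Pi.single 0 1) ^ 4)⁻¹)
  unfold pekarConst
  positivity

lemma WL_le_pekarConst_mul {L : ℝ} (hL : 0 < L) {ψ : Lat3 → ℂ}
    (hψ2 : Summable fun j => ‖ψ j‖ ^ 2) (hnorm : ∑' j, ‖ψ j‖ ^ 2 = 1)
    (hT : Summable fun k => knorm L k ^ 2 * ‖ψ k‖ ^ 2)
    (hW : Summable fun k => if k = 0 then (0:ℝ) else ‖rhoCoef L ψ k‖ ^ 2 / knorm L k ^ 2) :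
    WL L ψ ≤ pekarConst * L * TL L ψ := by
  calc WL L ψ ≤ ∑' k, L * TL L ψ / (4 * π ^ 4) * (latticeNorm 3 k ^ 4)⁻¹ :=
        hW.tsum_le_tsum (WL_summand_le hL hψ2 hnorm hT)
          ((summable_inv_latticeNorm_pow 3 (by norm_num)).mul_left _)
    _ = pekarConst * L * TL L ψ := by
        rw [tsum_mul_left, pekarConst]
        ring

lemma rhoCoef_constFn (L : ℝ) {k : Lat3} (hk : k ≠ 0) : rhoCoef L constFn k = 0 := by
  have h (j : Lat3) : (starRingEnd ℂ) (constFn j) * constFn (j + k) = 0 := by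
    by_cases hj : j = 0 <;> simp [constFn, hj, hk]
  simp [rhoCoef, h]

lemma EL_constFn (L : ℝ) : EL L constFn = 0 := by
  have hT (k : Lat3) : knorm L k ^ 2 * ‖constFn k‖ ^ 2 = 0 := by
    by_cases hk : k = 0 <;> simp [constFn, knorm, hk]
  have hW (k : Lat3) : (if k = 0 then 0 else ‖rhoCoef L constFn k‖ ^ 2 / knorm L k ^ 2) = 0 := by
    split_ifs with hk
    · rfl
    · simp [rhoCoef_constFn L hk]
  simp only [EL, TL, WL, hT, hW, tsum_zero, sub_zero]

/-- There is a universal `C > 0` such that for all `L > 0` and all normalized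
`ψ ∈ H¹(𝕋³_L)`: `W_L(ψ) ≤ C·L·T_L(ψ)`, hence `E_L(ψ) ≥ (1−CL)T_L(ψ)`; so for
`L < 1/C` the Pekar functional is nonnegative and strictly positive on every
non-constant normalized `ψ`, while the constant function has `E_L = 0`. -/
theorem WL_le_TL_small_L :
    ∃ C : ℝ, 0 < C ∧ ∀ L : ℝ, 0 < L →
      (∀ ψ : Lat3 → ℂ,
        Summable (fun j : Lat3 => ‖ψ j‖ ^ 2) →
        (∑' j : Lat3, ‖ψ j‖ ^ 2) = 1 →
        Summable (fun k : Lat3 => knorm L k ^ 2 * ‖ψ k‖ ^ 2) →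
        (∀ k : Lat3, Summable (fun j : Lat3 => (starRingEnd ℂ) (ψ j) * ψ (j + k))) →
        Summable (fun k : Lat3 =>
          if k = 0 then (0:ℝ) else ‖rhoCoef L ψ k‖ ^ 2 / knorm L k ^ 2) →
        WL L ψ ≤ C * L * TL L ψ ∧
        EL L ψ ≥ (1 - C * L) * TL L ψ ∧
        (L < 1 / C →
          0 ≤ EL L ψ ∧ ((∃ k : Lat3, k ≠ 0 ∧ ψ k ≠ 0) → 0 < EL L ψ))) ∧
      EL L constFn = 0 := by
  refine ⟨pekarConst, pekarConst_pos, fun L hL => ⟨fun ψ hψ2 hnorm hT _ hW => ?_, EL_constFn L⟩⟩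
  have hWT := WL_le_pekarConst_mul hL hψ2 hnorm hT hW
  have hET : EL L ψ ≥ (1 - pekarConst * L) * TL L ψ := by
    rw [EL]
    linarith
  refine ⟨hWT, hET, fun hsmall => ?_⟩
  have hCL : 0 < 1 - pekarConst * L := by
    rw [lt_div_iff₀ pekarConst_pos] at hsmall
    linarith
  exact ⟨(mul_nonneg hCL.le (TL_nonneg L ψ)).trans hET,
    fun ⟨k, hk, hψk⟩ => (mul_pos hCL (TL_pos hL hT hk hψk)).trans_le hET⟩
end

section
/- For every ψ ∈ H¹(𝕋³_L) with L ≥ L₀, the density ρ_ψ = |ψ|² satisfies ‖ρ_ψ‖_{Ḣ^{1/8}(𝕋³_L)} ≲ ‖ψ‖²_{H¹(𝕋³_L)}, with an implicit constant independent of L. -/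
open scoped Real BigOperators

/-- Squared fractional Sobolev seminorm `‖f‖²_{Ḣ^s(𝕋³_L)}`. -/
noncomputable def sobSq (L s : ℝ) (f : Lat3 → ℂ) : ℝ :=
  ∑' k : Lat3, if k = 0 then 0 else knorm L k ^ (2 * s) * ‖f k‖ ^ 2

/-- Squared `H¹(𝕋³_L)` norm. -/
noncomputable def H1nSq (L : ℝ) (ψ : Lat3 → ℂ) : ℝ :=
  ∑' k : Lat3, (1 + knorm L k ^ 2) * ‖ψ k‖ ^ 2

/-!
Write `a_j = |ψ̂_j|` and `w_j = 1 + |k_j|²` for the modes `k_j ∈ (2π/L)ℤ³`. Then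
`|ρ̂_k| ≤ L^{-3/2} ∑_j a_j a_{j+k}`, and Cauchy–Schwarz with the weights `w_j w_{j+k}` gives
`|ρ̂_k|² ≤ L^{-3} (∑_j (w_j w_{j+k})⁻¹) ∑_j w_j a_j² w_{j+k} a_{j+k}²`. Because
`|k| ≤ |k_j| + |k_{j+k}|`, one has `|k|^{1/4} (w_j w_{j+k})⁻¹ ≤ w_j^{-7/4} + w_{j+k}^{-7/4}`, so the
first factor weighted by `|k|^{1/4}` is at most `2 ∑_j w_j^{-7/4}`. This lattice sum is `O(L³)`
uniformly in `L ≥ L₀`, since `(1 + |x|²)^{-7/4}` is integrable on `ℝ³`; it is bounded by a product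
of three one-dimensional sums, each compared with an integral. Summing over `k`, the second factor
sums to `‖ψ‖⁴_{H¹}`, and the powers of `L` cancel.
-/

open scoped ENNReal
open MeasureTheory Set

namespace ENNReal

theorem tsum_mul_sq_le {ι : Type*} (f g : ι → ℝ≥0∞) :
    (∑' i, f i * g i) ^ 2 ≤ (∑' i, f i ^ 2) * ∑' i, g i ^ 2 := by
  let _ : MeasurableSpace ι := ⊤
  have hölder := lintegral_mul_le_Lp_mul_Lq (Measure.count : Measure ι)
    Real.HolderConjugate.two_two (f := f) (g := g)
    measurable_from_top.aemeasurable measurable_from_top.aemeasurable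
  simp only [lintegral_count, Pi.mul_apply, ENNReal.rpow_two] at hölder
  calc (∑' i, f i * g i) ^ 2
      ≤ ((∑' i, f i ^ 2) ^ (1 / 2 : ℝ) * (∑' i, g i ^ 2) ^ (1 / 2 : ℝ)) ^ 2 := by gcongr
    _ = (∑' i, f i ^ 2) * ∑' i, g i ^ 2 := by
      rw [mul_pow, ← ENNReal.rpow_two, ← ENNReal.rpow_two, ← ENNReal.rpow_mul,
        ← ENNReal.rpow_mul]
      norm_num

theorem tsum_sq_le_tsum_inv_mul_tsum_mul_sq {ι : Type*} {w : ι → ℝ≥0∞} (hw₀ : ∀ i, w i ≠ 0)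
    (hw : ∀ i, w i ≠ ∞) (x : ι → ℝ≥0∞) :
    (∑' i, x i) ^ 2 ≤ (∑' i, (w i)⁻¹) * ∑' i, w i * x i ^ 2 := by
  have hx : ∀ i, x i = (w i)⁻¹ ^ (1 / 2 : ℝ) * (w i ^ (1 / 2 : ℝ) * x i) := fun i => by
    rw [← mul_assoc, ENNReal.inv_rpow, ENNReal.inv_mul_cancel (by simp [hw₀ i, hw i])
      (by simp [hw i]), one_mul]
  calc (∑' i, x i) ^ 2 = (∑' i, (w i)⁻¹ ^ (1 / 2 : ℝ) * (w i ^ (1 / 2 : ℝ) * x i)) ^ 2 := by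
        rw [tsum_congr hx]
    _ ≤ _ := tsum_mul_sq_le _ _
    _ = (∑' i, (w i)⁻¹) * ∑' i, w i * x i ^ 2 := by
        simp only [mul_pow, ← ENNReal.rpow_natCast, ← ENNReal.rpow_mul]
        norm_num

theorem tsum_tsum_mul_add_eq_sq {G : Type*} [AddGroup G] (F : G → ℝ≥0∞) :
    ∑' k, ∑' j, F j * F (j + k) = (∑' j, F j) ^ 2 := by
  rw [ENNReal.tsum_comm, sq, ← ENNReal.tsum_mul_right]
  refine tsum_congr fun j => ?_
  rw [ENNReal.tsum_mul_left, ← (Equiv.addLeft j).tsum_eq F]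
  rfl

theorem tsum_pi_fin_prod {α : Type*} (g : α → ℝ≥0∞) (d : ℕ) :
    ∑' j : Fin d → α, ∏ i, g (j i) = (∑' a, g a) ^ d := by
  induction d with
  | zero => simp
  | succ d ih =>
    rw [← (Fin.consEquiv fun _ => α).tsum_eq, ENNReal.tsum_prod', pow_succ', ← ih,
      ← ENNReal.tsum_mul_right]
    simp [Fin.prod_univ_succ, ENNReal.tsum_mul_left]

theorem tsum_mul_tsum_mul_add_sq_le {G : Type*} [AddGroup G] {W V m : G → ℝ≥0∞}
    (hW₀ : ∀ j, W j ≠ 0) (hW : ∀ j, W j ≠ ∞)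
    (hm : ∀ j k, m k * (W j * W (j + k))⁻¹ ≤ V j + V (j + k)) (a : G → ℝ≥0∞) :
    ∑' k, m k * (∑' j, a j * a (j + k)) ^ 2 ≤
      2 * (∑' j, V j) * (∑' j, W j * a j ^ 2) ^ 2 := by
  have hk : ∀ k, m k * (∑' j, a j * a (j + k)) ^ 2 ≤
      2 * (∑' j, V j) * ∑' j, W j * a j ^ 2 * (W (j + k) * a (j + k) ^ 2) := fun k => calc
    m k * (∑' j, a j * a (j + k)) ^ 2
        ≤ m k * ((∑' j, (W j * W (j + k))⁻¹) *
            ∑' j, W j * W (j + k) * (a j * a (j + k)) ^ 2) := by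
      gcongr
      exact tsum_sq_le_tsum_inv_mul_tsum_mul_sq (fun j => mul_ne_zero (hW₀ j) (hW₀ _))
        (fun j => mul_ne_top (hW j) (hW _)) _
    _ = (∑' j, m k * (W j * W (j + k))⁻¹) *
            ∑' j, W j * a j ^ 2 * (W (j + k) * a (j + k) ^ 2) := by
      rw [ENNReal.tsum_mul_left, mul_assoc]
      congr 2
      exact tsum_congr fun j => by ring
    _ ≤ (∑' j, (V j + V (j + k))) * ∑' j, W j * a j ^ 2 * (W (j + k) * a (j + k) ^ 2) := by
      gcongr with j
      exact hm j k
    _ = 2 * (∑' j, V j) * ∑' j, W j * a j ^ 2 * (W (j + k) * a (j + k) ^ 2) := by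
      have hshift : ∑' j, V (j + k) = ∑' j, V j := (Equiv.addRight k).tsum_eq V
      rw [ENNReal.tsum_add, hshift, two_mul]
  calc ∑' k, m k * (∑' j, a j * a (j + k)) ^ 2
      ≤ ∑' k, 2 * (∑' j, V j) * ∑' j, W j * a j ^ 2 * (W (j + k) * a (j + k) ^ 2) :=
        ENNReal.tsum_le_tsum hk
    _ = 2 * (∑' j, V j) * (∑' j, W j * a j ^ 2) ^ 2 := by
      rw [ENNReal.tsum_mul_left, tsum_tsum_mul_add_eq_sq fun j => W j * a j ^ 2]

end ENNReal

theorem add_mul_pow_six_mul_pow_six_le {p q : ℝ} (hp : 1 ≤ p) (hq : 1 ≤ q) :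
    (p + q) * (p ^ 6 * q ^ 6) ≤ p ^ 14 + q ^ 14 := by
  have hp7 : p ^ 7 * q ^ 6 ≤ p ^ 7 * q ^ 7 :=
    mul_le_mul_of_nonneg_left (pow_le_pow_right₀ hq (by norm_num)) (by positivity)
  have hq7 : p ^ 6 * q ^ 7 ≤ p ^ 7 * q ^ 7 :=
    mul_le_mul_of_nonneg_right (pow_le_pow_right₀ hp (by norm_num)) (by positivity)
  nlinarith [sq_nonneg (p ^ 7 - q ^ 7)]

theorem rpow_quarter_mul_inv_le {x y z : ℝ} (hx : 0 ≤ x) (hy : 0 ≤ y) (hz : 0 ≤ z)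
    (hzxy : z ≤ x + y) :
    z ^ (1 / 4 : ℝ) * ((1 + x ^ 2) * (1 + y ^ 2))⁻¹ ≤
      (1 + x ^ 2) ^ (-(7 / 4) : ℝ) + (1 + y ^ 2) ^ (-(7 / 4) : ℝ) := by
  have root : ∀ t : ℝ, 0 ≤ t → t ^ (1 / 4 : ℝ) ≤ (1 + t ^ 2) ^ (1 / 8 : ℝ) ∧
      1 ≤ (1 + t ^ 2) ^ (1 / 8 : ℝ) ∧ 1 + t ^ 2 = ((1 + t ^ 2) ^ (1 / 8 : ℝ)) ^ 8 ∧
      (1 + t ^ 2) ^ (-(7 / 4) : ℝ) = (((1 + t ^ 2) ^ (1 / 8 : ℝ)) ^ 14)⁻¹ := fun t ht => by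
    have hpow : ∀ n : ℕ, ((1 + t ^ 2) ^ (1 / 8 : ℝ)) ^ n = (1 + t ^ 2) ^ (n / 8 : ℝ) := fun n => by
      rw [← Real.rpow_natCast, ← Real.rpow_mul (by positivity)]; ring_nf
    refine ⟨?_, Real.one_le_rpow (by nlinarith) (by norm_num), ?_, ?_⟩
    · calc t ^ (1 / 4 : ℝ) = (t ^ 2) ^ (1 / 8 : ℝ) := by
            rw [← Real.rpow_natCast, ← Real.rpow_mul ht]; norm_num
        _ ≤ (1 + t ^ 2) ^ (1 / 8 : ℝ) := by gcongr; linarith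
    · rw [hpow]; norm_num
    · rw [hpow, Real.rpow_neg (by positivity)]; norm_num
  obtain ⟨hxp, hp, hP, hP'⟩ := root x hx
  obtain ⟨hyq, hq, hQ, hQ'⟩ := root y hy
  set p := (1 + x ^ 2) ^ (1 / 8 : ℝ)
  set q := (1 + y ^ 2) ^ (1 / 8 : ℝ)
  have hzpq : z ^ (1 / 4 : ℝ) ≤ p + q := calc
    z ^ (1 / 4 : ℝ) ≤ (x + y) ^ (1 / 4 : ℝ) := by gcongr
    _ ≤ x ^ (1 / 4 : ℝ) + y ^ (1 / 4 : ℝ) :=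
      Real.rpow_add_le_add_rpow hx hy (by norm_num) (by norm_num)
    _ ≤ p + q := add_le_add hxp hyq
  have hp0 : 0 < p := by linarith
  have hq0 : 0 < q := by linarith
  rw [hP', hQ', hP, hQ]
  calc z ^ (1 / 4 : ℝ) * (p ^ 8 * q ^ 8)⁻¹ ≤ (p + q) * (p ^ 8 * q ^ 8)⁻¹ := by gcongr
    _ ≤ (p ^ 14)⁻¹ + (q ^ 14)⁻¹ := by
      field_simp
      linarith [add_mul_pow_six_mul_pow_six_le hp hq]

theorem rpow_neg_one_add_sum_sq_le_prod {ι : Type*} [Fintype ι] (x : ι → ℝ) {s : ℝ}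
    (hs : 0 ≤ s) :
    (1 + ∑ i, x i ^ 2) ^ (-s) ≤ ∏ i, (1 + x i ^ 2) ^ (-s / Fintype.card ι) := by
  rcases isEmpty_or_nonempty ι with hι | hι
  · simp
  have hn : (Fintype.card ι : ℝ) ≠ 0 := by positivity
  calc (1 + ∑ i, x i ^ 2) ^ (-s)
      = ∏ _i : ι, (1 + ∑ i, x i ^ 2) ^ (-s / Fintype.card ι) := by
        rw [Finset.prod_const, Finset.card_univ, ← Real.rpow_natCast,
          ← Real.rpow_mul (by positivity), div_mul_cancel₀ _ hn]
    _ ≤ ∏ i, (1 + x i ^ 2) ^ (-s / Fintype.card ι) := by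
        refine Finset.prod_le_prod (fun i _ => by positivity) fun i _ => ?_
        refine Real.rpow_le_rpow_of_nonpos (by positivity) ?_
          (div_nonpos_of_nonpos_of_nonneg (neg_nonpos.2 hs) (by positivity))
        grw [← Finset.single_le_sum (fun j _ => sq_nonneg (x j)) (Finset.mem_univ i)]

theorem tsum_int_rpow_neg_one_add_mul_sq_le {s c : ℝ} (hs : 1 / 2 < s) (hc : 0 < c) :
    ∑' n : ℤ, ENNReal.ofReal ((1 + (c * n) ^ 2) ^ (-s)) ≤
      ENNReal.ofReal (2 * (1 + c⁻¹ * ∫ t in Ioi 0, (1 + t ^ 2) ^ (-s))) := by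
  set f : ℝ → ℝ := fun t => (1 + (c * t) ^ 2) ^ (-s)
  have anti : AntitoneOn f (Ici 0) := fun a ha b _ hab =>
    Real.rpow_le_rpow_of_nonpos (by positivity)
      (by gcongr; exact mul_nonneg hc.le ha) (by linarith)
  have integrable : IntegrableOn f (Ioi 0) := by
    have h := (integrable_rpow_neg_one_add_norm_sq (E := ℝ) (μ := volume) (r := 2 * s)
      (by rw [Module.finrank_self, Nat.cast_one]; linarith)).comp_mul_left' hc.ne'
    simpa [f, mul_pow, sq_abs, show -(2 * s) / 2 = -s by ring] using h.integrableOn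
  have nonneg : ∀ t ∈ Ioi (0 : ℝ), 0 ≤ f t := fun t _ => by positivity
  have hnat : ∑' n : ℕ, f n ≤ 1 + c⁻¹ * ∫ t in Ioi 0, (1 + t ^ 2) ^ (-s) := by
    have h := anti.tsum_le_integral integrable nonneg
    rwa [integral_comp_mul_left_Ioi (fun t => (1 + t ^ 2) ^ (-s)) 0 hc, mul_zero, smul_eq_mul,
      show f 0 = 1 by simp [f]] at h
  have hsymm : ∀ n : ℕ, f (-((n : ℤ) + 1) : ℤ) = f (n + 1 : ℕ) := fun n => by
    simp only [f]
    push_cast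
    ring_nf
  calc ∑' n : ℤ, ENNReal.ofReal (f n)
      = ∑' n : ℕ, ENNReal.ofReal (f n) + ∑' n : ℕ, ENNReal.ofReal (f (n + 1 : ℕ)) := by
        rw [tsum_of_nat_of_neg_add_one ENNReal.summable ENNReal.summable]
        simp only [Int.cast_natCast, hsymm]
    _ ≤ ∑' n : ℕ, ENNReal.ofReal (f n) + ∑' n : ℕ, ENNReal.ofReal (f n) :=
        add_le_add le_rfl (ENNReal.tsum_comp_le_tsum_of_injective (add_left_injective 1)
          fun n : ℕ => ENNReal.ofReal (f n))
    _ = ENNReal.ofReal (2 * ∑' n : ℕ, f n) := by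
        rw [two_mul, ENNReal.ofReal_add (by positivity) (by positivity),
          ENNReal.ofReal_tsum_of_nonneg (fun n => by positivity)
            (anti.summable_of_integrableOn_Ioi_zero integrable nonneg)]
    _ ≤ _ := ENNReal.ofReal_le_ofReal (by linarith)

theorem knorm_eq_mul_norm (L : ℝ) (k : Lat3) :
    knorm L k = 2 * π / L * ‖(WithLp.toLp 2 fun i => (k i : ℝ) : EuclideanSpace ℝ (Fin 3))‖ := by
  simp [knorm, EuclideanSpace.norm_eq]

theorem knorm_sq (L : ℝ) (k : Lat3) : knorm L k ^ 2 = ∑ i, (2 * π / L * k i) ^ 2 := by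
  rw [knorm, mul_pow, Real.sq_sqrt (by positivity), Finset.mul_sum]
  simp only [mul_pow]

theorem knorm_nonneg {L : ℝ} (hL : 0 ≤ L) (k : Lat3) : 0 ≤ knorm L k := by
  unfold knorm; positivity

theorem knorm_le_add {L : ℝ} (hL : 0 ≤ L) (j k : Lat3) :
    knorm L k ≤ knorm L j + knorm L (j + k) := by
  simp only [knorm_eq_mul_norm, ← mul_add]
  gcongr
  calc _ = ‖(WithLp.toLp 2 fun i => ((j + k) i : ℝ) : EuclideanSpace ℝ (Fin 3)) -
        WithLp.toLp 2 fun i => (j i : ℝ)‖ := by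
        congr 1; ext i; simp
    _ ≤ _ := (norm_sub_le _ _).trans_eq (add_comm _ _)

theorem tsum_rpow_neg_one_add_knorm_sq_le {L s : ℝ} (hL : 0 < L) (hs : 3 / 2 < s) :
    ∑' j : Lat3, ENNReal.ofReal ((1 + knorm L j ^ 2) ^ (-s)) ≤
      ENNReal.ofReal (2 * (1 + L / (2 * π) * ∫ t in Ioi 0, (1 + t ^ 2) ^ (-(s / 3)))) ^ 3 := by
  set g : ℤ → ℝ≥0∞ := fun n => ENNReal.ofReal ((1 + (2 * π / L * n) ^ 2) ^ (-(s / 3)))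
  have hprod : ∀ j : Lat3, ENNReal.ofReal ((1 + knorm L j ^ 2) ^ (-s)) ≤ ∏ i, g (j i) := by
    intro j
    rw [← ENNReal.ofReal_prod_of_nonneg fun i _ => by positivity, knorm_sq]
    refine ENNReal.ofReal_le_ofReal ((rpow_neg_one_add_sum_sq_le_prod _ (by linarith)).trans_eq ?_)
    simp [neg_div]
  calc ∑' j : Lat3, ENNReal.ofReal ((1 + knorm L j ^ 2) ^ (-s))
      ≤ ∑' j : Lat3, ∏ i, g (j i) := ENNReal.tsum_le_tsum hprod
    _ = (∑' n, g n) ^ 3 := ENNReal.tsum_pi_fin_prod g 3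
    _ ≤ _ := by
      gcongr
      simpa only [inv_div] using
        tsum_int_rpow_neg_one_add_mul_sq_le (s := s / 3) (c := 2 * π / L) (by linarith)
          (by positivity)

theorem enorm_rhoCoef_sq_le {L : ℝ} (hL : 0 < L) (ψ : Lat3 → ℂ) (k : Lat3) :
    ‖rhoCoef L ψ k‖ₑ ^ 2 ≤ (ENNReal.ofReal L ^ 3)⁻¹ * (∑' j, ‖ψ j‖ₑ * ‖ψ (j + k)‖ₑ) ^ 2 := by
  have hL32 : ‖((L ^ (-(3 : ℝ) / 2) : ℝ) : ℂ)‖ₑ ^ 2 = (ENNReal.ofReal L ^ 3)⁻¹ := by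
    rw [← ofReal_norm, Complex.norm_real, Real.norm_of_nonneg (by positivity),
      ← ENNReal.ofReal_pow (by positivity), ← ENNReal.ofReal_pow hL.le,
      ← ENNReal.ofReal_inv_of_pos (by positivity), ← Real.rpow_natCast, ← Real.rpow_mul hL.le,
      ← Real.rpow_natCast, ← Real.rpow_neg hL.le]
    norm_num
  rw [rhoCoef, enorm_mul, mul_pow, hL32]
  gcongr
  refine enorm_tsum_le_tsum_enorm.trans_eq (tsum_congr fun j => ?_)
  rw [enorm_mul, RCLike.enorm_conj]

theorem ofReal_H1nSq {L : ℝ} {ψ : Lat3 → ℂ}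
    (hψ : Summable fun k => (1 + knorm L k ^ 2) * ‖ψ k‖ ^ 2) :
    ENNReal.ofReal (H1nSq L ψ) = ∑' j, ENNReal.ofReal (1 + knorm L j ^ 2) * ‖ψ j‖ₑ ^ 2 := by
  rw [H1nSq, ENNReal.ofReal_tsum_of_nonneg (fun j => by positivity) hψ]
  refine tsum_congr fun j => ?_
  rw [ENNReal.ofReal_mul (by positivity), ENNReal.ofReal_pow (norm_nonneg _), ofReal_norm]

theorem ofReal_knorm_rpow_mul_inv_le {L : ℝ} (hL : 0 ≤ L) (j k : Lat3) :
    ENNReal.ofReal (knorm L k ^ (1 / 4 : ℝ)) *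
        (ENNReal.ofReal (1 + knorm L j ^ 2) * ENNReal.ofReal (1 + knorm L (j + k) ^ 2))⁻¹ ≤
      ENNReal.ofReal ((1 + knorm L j ^ 2) ^ (-(7 / 4) : ℝ)) +
        ENNReal.ofReal ((1 + knorm L (j + k) ^ 2) ^ (-(7 / 4) : ℝ)) := by
  have hk := knorm_nonneg hL
  rw [← ENNReal.ofReal_mul (by positivity), ← ENNReal.ofReal_inv_of_pos (by positivity),
    ← ENNReal.ofReal_mul (Real.rpow_nonneg (hk k) _),
    ← ENNReal.ofReal_add (by positivity) (by positivity)]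
  exact ENNReal.ofReal_le_ofReal
    (rpow_quarter_mul_inv_le (hk j) (hk _) (hk k) (knorm_le_add hL j k))

/-- `(L · latticeSumConst L)³` bounds `∑_j (1 + |k_j|²)^{-7/4}` over `k_j ∈ (2π/L)ℤ³`. -/
noncomputable def latticeSumConst (L : ℝ) : ℝ :=
  2 * (L⁻¹ + (2 * π)⁻¹ * ∫ t in Ioi 0, (1 + t ^ 2) ^ (-(7 / 12 : ℝ)))

theorem latticeSumConst_pos {L : ℝ} (hL : 0 < L) : 0 < latticeSumConst L := by
  unfold latticeSumConst
  positivity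

theorem latticeSumConst_antitoneOn : AntitoneOn latticeSumConst (Ioi 0) := by
  intro L₀ hL₀ L _ hL
  have : 0 < L₀ := hL₀
  unfold latticeSumConst
  gcongr

theorem tsum_rpow_neg_seven_fourths_one_add_knorm_sq_le {L : ℝ} (hL : 0 < L) :
    ∑' j : Lat3, ENNReal.ofReal ((1 + knorm L j ^ 2) ^ (-(7 / 4) : ℝ)) ≤
      ENNReal.ofReal (L * latticeSumConst L) ^ 3 := by
  convert tsum_rpow_neg_one_add_knorm_sq_le hL (s := 7 / 4) (by norm_num) using 3
  rw [latticeSumConst]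
  field_simp
  norm_num

theorem tsum_knorm_rpow_mul_enorm_rhoCoef_sq_le {L : ℝ} (hL : 0 < L) {ψ : Lat3 → ℂ}
    (hψ : Summable fun k => (1 + knorm L k ^ 2) * ‖ψ k‖ ^ 2) :
    ∑' k, ENNReal.ofReal (knorm L k ^ (1 / 4 : ℝ)) * ‖rhoCoef L ψ k‖ₑ ^ 2 ≤
      ENNReal.ofReal (2 * latticeSumConst L ^ 3 * H1nSq L ψ ^ 2) := by
  have hM := latticeSumConst_pos hL
  have hH : 0 ≤ H1nSq L ψ := tsum_nonneg fun j => by positivity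
  have hL3 : (ENNReal.ofReal L ^ 3)⁻¹ * ENNReal.ofReal L ^ 3 = 1 :=
    ENNReal.inv_mul_cancel (by simp [hL]) (by simp)
  calc _ ≤ ∑' k, (ENNReal.ofReal L ^ 3)⁻¹ *
          (ENNReal.ofReal (knorm L k ^ (1 / 4 : ℝ)) * (∑' j, ‖ψ j‖ₑ * ‖ψ (j + k)‖ₑ) ^ 2) := by
        refine ENNReal.tsum_le_tsum fun k => ?_
        rw [mul_left_comm]
        gcongr
        exact enorm_rhoCoef_sq_le hL ψ k
    _ ≤ (ENNReal.ofReal L ^ 3)⁻¹ *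
          (2 * ENNReal.ofReal (L * latticeSumConst L) ^ 3 * ENNReal.ofReal (H1nSq L ψ) ^ 2) := by
        rw [ENNReal.tsum_mul_left, ofReal_H1nSq hψ]
        gcongr
        refine (ENNReal.tsum_mul_tsum_mul_add_sq_le
          (fun j => (ENNReal.ofReal_pos.2 (by positivity)).ne') (fun j => ENNReal.ofReal_ne_top)
          (ofReal_knorm_rpow_mul_inv_le hL.le) _).trans ?_
        gcongr
        exact tsum_rpow_neg_seven_fourths_one_add_knorm_sq_le hL
    _ = (ENNReal.ofReal L ^ 3)⁻¹ * ENNReal.ofReal L ^ 3 *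
          (2 * ENNReal.ofReal (latticeSumConst L) ^ 3 * ENNReal.ofReal (H1nSq L ψ) ^ 2) := by
        rw [ENNReal.ofReal_mul hL.le]
        ring
    _ = ENNReal.ofReal (2 * latticeSumConst L ^ 3 * H1nSq L ψ ^ 2) := by
        rw [hL3, one_mul, ENNReal.ofReal_mul (by positivity), ENNReal.ofReal_mul (by positivity),
          ENNReal.ofReal_pow hM.le, ENNReal.ofReal_pow hH,
          ENNReal.ofReal_ofNat]

theorem sobSq_one_eighth_rhoCoef_le {L : ℝ} (hL : 0 < L) {ψ : Lat3 → ℂ}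
    (hψ : Summable fun k => (1 + knorm L k ^ 2) * ‖ψ k‖ ^ 2) :
    sobSq L (1 / 8) (rhoCoef L ψ) ≤ 2 * latticeSumConst L ^ 3 * H1nSq L ψ ^ 2 := by
  have hM := latticeSumConst_pos hL
  have hkr : ∀ k (r : ℝ), 0 ≤ knorm L k ^ r := fun k r => Real.rpow_nonneg (knorm_nonneg hL.le k) r
  have hsummand : ∀ k, 0 ≤ knorm L k ^ (2 * (1 / 8 : ℝ)) * ‖rhoCoef L ψ k‖ ^ 2 :=
    fun k => mul_nonneg (hkr k _) (sq_nonneg _)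
  by_cases hρ : Summable fun k : Lat3 =>
    if k = 0 then (0 : ℝ) else knorm L k ^ (2 * (1 / 8 : ℝ)) * ‖rhoCoef L ψ k‖ ^ 2
  swap
  · rw [sobSq, tsum_eq_zero_of_not_summable hρ]
    positivity
  rw [← ENNReal.ofReal_le_ofReal_iff (by positivity), sobSq,
    ENNReal.ofReal_tsum_of_nonneg (fun k => by split_ifs; exacts [le_rfl, hsummand k]) hρ]
  refine le_trans (ENNReal.tsum_le_tsum fun k => ?_) (tsum_knorm_rpow_mul_enorm_rhoCoef_sq_le hL hψ)
  rw [← ofReal_norm, ← ENNReal.ofReal_pow (norm_nonneg _), ← ENNReal.ofReal_mul (hkr k _)]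
  refine ENNReal.ofReal_le_ofReal ?_
  split_ifs
  · exact mul_nonneg (hkr k _) (sq_nonneg _)
  · norm_num

/-- For `ψ ∈ H¹(𝕋³_L)` with `L ≥ L₀`, `‖ρ_ψ‖_{Ḣ^{1/8}(𝕋³_L)} ≲ ‖ψ‖²_{H¹(𝕋³_L)}`,
with implicit constant independent of `L`. -/
theorem rho_H_one_eighth_bound :
    ∀ L₀ : ℝ, 0 < L₀ → ∃ C : ℝ, 0 < C ∧ ∀ L : ℝ, L₀ ≤ L →
      ∀ ψ : Lat3 → ℂ,
        Summable (fun k : Lat3 => (1 + knorm L k ^ 2) * ‖ψ k‖ ^ 2) →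
        (∀ k : Lat3, Summable (fun j : Lat3 => (starRingEnd ℂ) (ψ j) * ψ (j + k))) →
        Summable (fun k : Lat3 =>
          if k = 0 then (0:ℝ)
          else knorm L k ^ (2 * (1/8 : ℝ)) * ‖rhoCoef L ψ k‖ ^ 2) →
        Real.sqrt (sobSq L (1/8) (rhoCoef L ψ)) ≤ C * H1nSq L ψ := by
  intro L₀ hL₀
  have hM₀ := latticeSumConst_pos hL₀
  refine ⟨√(2 * latticeSumConst L₀ ^ 3), by positivity, fun L hL ψ hψ _ _ => ?_⟩
  have hL0 : 0 < L := hL₀.trans_le hL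
  have hM := latticeSumConst_pos hL0
  have hH : 0 ≤ H1nSq L ψ := tsum_nonneg fun j => by positivity
  calc √(sobSq L (1 / 8) (rhoCoef L ψ))
      ≤ √(2 * latticeSumConst L ^ 3 * H1nSq L ψ ^ 2) :=
        Real.sqrt_le_sqrt (sobSq_one_eighth_rhoCoef_le hL0 hψ)
    _ = √(2 * latticeSumConst L ^ 3) * H1nSq L ψ := by
        rw [Real.sqrt_mul (by positivity), Real.sqrt_sq hH]
    _ ≤ √(2 * latticeSumConst L₀ ^ 3) * H1nSq L ψ := by
        gcongr
        exact latticeSumConst_antitoneOn hL₀ hL0 hL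
end
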